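/- With ψ, u, u_ψ, l as above, suppose ψ^u is injective, ψ^u(k[x_1,...,x_n]) is not contained in k[x_1,...,x_l], and S ⊂ k[x_1,...,x_n]∖{0} is a set with trdeg_k k[S] = n. Then there exists g ∈ S such that for every nonzero f ∈ ψ^{-1}(k[x_1,...,x_l]), the initial form f^{u_ψ} is not divisible by g. -/

import Mathlib

open MvPolynomial

/-- The `w`-weight `a·w` of an exponent vector `a`. -/
def mwt {n : ℕ} {Γ : Type*} [AddCommGroup Γ] (w : Fin n → Γ) (a : Fin n →₀ ℕ) : Γ :=
  a.sum fun i e => e • w i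

/-- The `w`-degree of a polynomial, with `deg_w 0 = ⊥`. -/
noncomputable def wdeg {k : Type*} [CommRing k] {n : ℕ} {Γ : Type*}
    [AddCommGroup Γ] [LinearOrder Γ] [IsOrderedAddMonoid Γ] (w : Fin n → Γ) (f : MvPolynomial (Fin n) k) : WithBot Γ :=
  f.support.sup fun a => ((mwt w a : Γ) : WithBot Γ)

/-- The `w`-initial form of a polynomial (`0` for the zero polynomial). -/
noncomputable def initForm {k : Type*} [CommRing k] {n : ℕ} {Γ : Type*}
    [AddCommGroup Γ] [LinearOrder Γ] [IsOrderedAddMonoid Γ] (w : Fin n → Γ) (f : MvPolynomial (Fin n) k) :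
    MvPolynomial (Fin n) k :=
  ∑ a ∈ f.support.filter (fun a => ((mwt w a : Γ) : WithBot Γ) = wdeg w f),
    monomial a (f.coeff a)

/-!
Write `ψ^u = aeval (fun i => initForm u (ψ (X i)))`. Leading forms are multiplicative, so on
monomials, and hence on every `f`, `ψ^u` sends the `u_ψ`-initial form of `f` to the
`u`-homogeneous component of `ψ f` of degree `deg_{u_ψ} f`; in particular
`ψ f ∈ k[x_1,…,x_l]` forces `ψ^u(f^{u_ψ}) ∈ k[x_1,…,x_l]`. Since `ψ^u` is injective, the
preimage `T` of `k[x_1,…,x_l]` is factorially closed. If every `g ∈ S` divided such an initial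
form, `T` would contain `n` algebraically independent elements `y`. Every `p` is algebraic over
`k[y]`, so `p` divides a nonzero element of `T` and therefore lies in `T`; thus
`ψ^u(k[x]) ⊆ k[x_1,…,x_l]`, a contradiction.
-/

def Subalgebra.IsFactoriallyClosed {R A : Type*} [CommSemiring R] [CommRing A] [Algebra R A]
    (T : Subalgebra R A) : Prop :=
  ∀ ⦃p q : A⦄, q ≠ 0 → p * q ∈ T → p ∈ T

theorem Subalgebra.IsFactoriallyClosed.comap {R A B : Type*} [CommSemiring R] [CommRing A]
    [CommRing B] [Algebra R A] [Algebra R B] {T : Subalgebra R B} (hT : T.IsFactoriallyClosed)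
    {φ : A →ₐ[R] B} (hφ : Function.Injective φ) : (T.comap φ).IsFactoriallyClosed :=
  fun p q hq hpq => hT ((map_ne_zero_iff φ hφ).2 hq) (by simpa using hpq)

theorem exists_ne_zero_mem_dvd_of_isAlgebraic {R A : Type*} [CommRing R] [CommRing A]
    [IsDomain A] [Algebra R A] {B : Subalgebra R A} {p : A} (hp : IsAlgebraic B p) (hp0 : p ≠ 0) :
    ∃ c ∈ B, c ≠ 0 ∧ p ∣ c := by
  obtain ⟨Q, hQ0, hQp⟩ := hp
  set Q' := Q.map (algebraMap B A)
  have hQ'0 : Q' ≠ 0 :=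
    (Polynomial.map_ne_zero_iff (FaithfulSMul.algebraMap_injective B A)).2 hQ0
  obtain ⟨F, hF⟩ : Polynomial.X - Polynomial.C p ∣ Q' := by
    rw [Polynomial.dvd_iff_isRoot, Polynomial.IsRoot, Polynomial.eval_map_algebraMap]
    exact hQp
  -- the lowest nonzero coefficient of `Q'` is `-p` times that of `F`
  have hlin : (Polynomial.X - Polynomial.C p).trailingCoeff = -p := by
    rw [Polynomial.trailingCoeff,
      Polynomial.natTrailingDegree_eq_zero.2 (.inr (by simpa using hp0))]
    simp
  refine ⟨Q'.trailingCoeff, ?_, Polynomial.trailingCoeff_nonzero_iff_nonzero.2 hQ'0, ?_⟩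
  · rw [Polynomial.trailingCoeff, Polynomial.coeff_map]
    exact (Q.coeff _).2
  · rw [hF, Polynomial.trailingCoeff_mul, hlin]
    exact ⟨-F.trailingCoeff, by ring⟩

theorem Subalgebra.IsFactoriallyClosed.eq_top {R A : Type*} [CommRing R] [CommRing A]
    [IsDomain A] [Algebra R A] {T B : Subalgebra R A} (hT : T.IsFactoriallyClosed) (hBT : B ≤ T)
    [Algebra.IsAlgebraic B A] : T = ⊤ := by
  refine eq_top_iff.2 fun p _ => ?_
  obtain rfl | hp0 := eq_or_ne p 0
  · exact T.zero_mem
  obtain ⟨c, hcB, hc0, q, rfl⟩ :=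
    exists_ne_zero_mem_dvd_of_isAlgebraic (Algebra.IsAlgebraic.isAlgebraic (R := B) p) hp0
  exact hT (right_ne_zero_of_mul hc0) (hBT hcB)

namespace MvPolynomial

theorem isFactoriallyClosed_supported {R σ : Type*} [CommRing R] [IsDomain R]
    (s : Set σ) : (supported R s).IsFactoriallyClosed := by
  intro p q hq hpq
  obtain rfl | hp := eq_or_ne p 0
  · exact Subalgebra.zero_mem _
  rw [mem_supported] at hpq ⊢
  intro i hi
  refine hpq ?_
  rw [Finset.mem_coe, mem_vars_iff_degreeOf_ne_zero] at hi ⊢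
  rw [degreeOf_mul_eq hp hq]
  omega

section WeightedDegree

variable {R σ M : Type*} [CommRing R] [AddCommMonoid M] [LinearOrder M] {w : σ → M}

theorem weight_le_weightedTotalDegree' {p : MvPolynomial σ R} {a : σ →₀ ℕ}
    (ha : a ∈ p.support) :
    (Finsupp.weight w a : WithBot M) ≤ weightedTotalDegree' w p :=
  Finset.le_sup (f := fun a => (Finsupp.weight w a : WithBot M)) ha

theorem weightedTotalDegree'_lt_iff {p : MvPolynomial σ R} {d : M} :
    weightedTotalDegree' w p < d ↔ ∀ a ∈ p.support, Finsupp.weight w a < d := by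
  simp [weightedTotalDegree', Finset.sup_lt_iff (WithBot.bot_lt_coe d)]

theorem weightedTotalDegree'_add_le (p q : MvPolynomial σ R) :
    weightedTotalDegree' w (p + q) ≤ weightedTotalDegree' w p ⊔ weightedTotalDegree' w q := by
  classical
  refine Finset.sup_le fun a ha => ?_
  rcases Finset.mem_union.1 (support_add ha) with h | h
  · exact le_sup_of_le_left (weight_le_weightedTotalDegree' h)
  · exact le_sup_of_le_right (weight_le_weightedTotalDegree' h)

theorem IsWeightedHomogeneous.weightedTotalDegree'_le {p : MvPolynomial σ R} {d : M}
    (hp : IsWeightedHomogeneous w p d) : weightedTotalDegree' w p ≤ d :=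
  Finset.sup_le fun _ ha => WithBot.coe_le_coe.2 (hp (mem_support_iff.1 ha)).le

def IsLeadingForm (w : σ → M) (d : M) (p h : MvPolynomial σ R) : Prop :=
  IsWeightedHomogeneous w h d ∧ weightedTotalDegree' w (p - h) < d

variable {d e : M} {p q h g : MvPolynomial σ R}

theorem isLeadingForm_zero_right_iff : IsLeadingForm w d p 0 ↔ weightedTotalDegree' w p < d := by
  simp [IsLeadingForm, isWeightedHomogeneous_zero]

theorem isLeadingForm_weightedHomogeneousComponent (hp : weightedTotalDegree' w p ≤ d) :
    IsLeadingForm w d p (weightedHomogeneousComponent w d p) := by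
  classical
  refine ⟨weightedHomogeneousComponent_isWeightedHomogeneous d p,
    weightedTotalDegree'_lt_iff.2 fun a ha => ?_⟩
  rw [mem_support_iff, coeff_sub, coeff_weightedHomogeneousComponent] at ha
  have had : Finsupp.weight w a ≠ d := fun had => ha (by simp [had])
  rw [if_neg had, sub_zero, ← mem_support_iff] at ha
  exact (WithBot.coe_le_coe.1 ((weight_le_weightedTotalDegree' ha).trans hp)).lt_of_ne had

theorem isLeadingForm_one : IsLeadingForm w 0 (1 : MvPolynomial σ R) 1 :=
  ⟨isWeightedHomogeneous_one R w, by simp [weightedTotalDegree'_zero]⟩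

namespace IsLeadingForm

theorem weightedTotalDegree'_le (hp : IsLeadingForm w d p h) : weightedTotalDegree' w p ≤ d :=
  calc weightedTotalDegree' w p = weightedTotalDegree' w (p - h + h) := by rw [sub_add_cancel]
    _ ≤ weightedTotalDegree' w (p - h) ⊔ weightedTotalDegree' w h :=
      weightedTotalDegree'_add_le _ _
    _ ≤ d := sup_le hp.2.le hp.1.weightedTotalDegree'_le

theorem weightedHomogeneousComponent_eq (hp : IsLeadingForm w d p h) :
    weightedHomogeneousComponent w d p = h := by
  classical
  ext a
  rw [coeff_weightedHomogeneousComponent]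
  split_ifs with had
  · by_contra hne
    have ha : a ∈ (p - h).support := by
      rw [mem_support_iff, coeff_sub, sub_ne_zero]
      exact hne
    exact (weightedTotalDegree'_lt_iff.1 hp.2 a ha).ne had
  · exact (hp.1.coeff_eq_zero a had).symm

theorem add (hp : IsLeadingForm w d p h) (hq : IsLeadingForm w d q g) :
    IsLeadingForm w d (p + q) (h + g) := by
  refine ⟨hp.1.add hq.1, ?_⟩
  rw [add_sub_add_comm]
  exact (weightedTotalDegree'_add_le _ _).trans_lt (sup_lt_iff.2 ⟨hp.2, hq.2⟩)

theorem sum {ι : Type*} (s : Finset ι) {p h : ι → MvPolynomial σ R}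
    (hs : ∀ i ∈ s, IsLeadingForm w d (p i) (h i)) :
    IsLeadingForm w d (∑ i ∈ s, p i) (∑ i ∈ s, h i) := by
  classical
  induction s using Finset.induction_on with
  | empty => simp [isLeadingForm_zero_right_iff, weightedTotalDegree'_zero]
  | insert i s hi ih =>
    rw [Finset.sum_insert hi, Finset.sum_insert hi]
    exact (hs i (Finset.mem_insert_self i s)).add
      (ih fun j hj => hs j (Finset.mem_insert_of_mem hj))

theorem C_mul (hp : IsLeadingForm w d p h) (c : R) : IsLeadingForm w d (C c * p) (C c * h) := by
  refine ⟨hp.1.C_mul c, ?_⟩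
  rw [← mul_sub, C_mul']
  exact (Finset.sup_mono support_smul).trans_lt hp.2

end IsLeadingForm

variable [IsOrderedCancelAddMonoid M]

theorem weightedTotalDegree'_mul_le (p q : MvPolynomial σ R) :
    weightedTotalDegree' w (p * q) ≤ weightedTotalDegree' w p + weightedTotalDegree' w q := by
  classical
  refine Finset.sup_le fun c hc => ?_
  obtain ⟨a, ha, b, hb, rfl⟩ := Finset.mem_add.1 (support_mul p q hc)
  rw [map_add, WithBot.coe_add]
  exact add_le_add (weight_le_weightedTotalDegree' ha) (weight_le_weightedTotalDegree' hb)

theorem weightedTotalDegree'_mul_lt (hp : weightedTotalDegree' w p < d)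
    (hq : weightedTotalDegree' w q ≤ e) : weightedTotalDegree' w (p * q) < ↑(d + e) :=
  calc weightedTotalDegree' w (p * q)
      ≤ weightedTotalDegree' w p + e := (weightedTotalDegree'_mul_le p q).trans (by gcongr)
    _ < ↑(d + e) := WithBot.add_lt_add_right WithBot.coe_ne_bot hp

namespace IsLeadingForm

theorem mul (hp : IsLeadingForm w d p h) (hq : IsLeadingForm w e q g) :
    IsLeadingForm w (d + e) (p * q) (h * g) := by
  refine ⟨hp.1.mul hq.1, ?_⟩
  rw [show p * q - h * g = (p - h) * q + (q - g) * h by ring]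
  refine (weightedTotalDegree'_add_le _ _).trans_lt (sup_lt_iff.2 ⟨?_, ?_⟩)
  · exact weightedTotalDegree'_mul_lt hp.2 hq.weightedTotalDegree'_le
  · rw [add_comm d]
    exact weightedTotalDegree'_mul_lt hq.2 hp.1.weightedTotalDegree'_le

theorem pow (hp : IsLeadingForm w d p h) (n : ℕ) : IsLeadingForm w (n • d) (p ^ n) (h ^ n) := by
  induction n with
  | zero => simpa using isLeadingForm_one
  | succ n ih => simpa [pow_succ, succ_nsmul] using ih.mul hp

theorem prod {ι : Type*} (s : Finset ι) {d : ι → M} {p h : ι → MvPolynomial σ R}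
    (hs : ∀ i ∈ s, IsLeadingForm w (d i) (p i) (h i)) :
    IsLeadingForm w (∑ i ∈ s, d i) (∏ i ∈ s, p i) (∏ i ∈ s, h i) := by
  classical
  induction s using Finset.induction_on with
  | empty => simpa using isLeadingForm_one
  | insert i s hi ih =>
    rw [Finset.sum_insert hi, Finset.prod_insert hi, Finset.prod_insert hi]
    exact (hs i (Finset.mem_insert_self i s)).mul
      (ih fun j hj => hs j (Finset.mem_insert_of_mem hj))

end IsLeadingForm

variable {τ : Type*} (ψ : MvPolynomial σ R →ₐ[R] MvPolynomial τ R) {u : τ → M} {v : σ → M}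

theorem isLeadingForm_map_monomial (hv : ∀ i, weightedTotalDegree' u (ψ (X i)) ≤ v i)
    (a : σ →₀ ℕ) (c : R) :
    IsLeadingForm u (Finsupp.weight v a) (ψ (monomial a c))
      (aeval (fun i => weightedHomogeneousComponent u (v i) (ψ (X i))) (monomial a c)) := by
  have hψ : ψ (monomial a c) = C c * a.prod fun i k => ψ (X i) ^ k := by
    conv_lhs => rw [aeval_unique ψ]
    rw [aeval_monomial, algebraMap_eq]
    rfl
  rw [hψ, aeval_monomial, algebraMap_eq, Finsupp.weight_apply, Finsupp.prod, Finsupp.prod,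
    Finsupp.sum]
  exact (IsLeadingForm.prod _ fun i _ =>
    (isLeadingForm_weightedHomogeneousComponent (hv i)).pow (a i)).C_mul c

theorem isLeadingForm_map (hv : ∀ i, weightedTotalDegree' u (ψ (X i)) ≤ v i)
    {f : MvPolynomial σ R} (hf : weightedTotalDegree' v f ≤ d) :
    IsLeadingForm u d (ψ f)
      (aeval (fun i => weightedHomogeneousComponent u (v i) (ψ (X i)))
        (weightedHomogeneousComponent v d f)) := by
  rw [f.as_sum, map_sum, map_sum, map_sum]
  refine IsLeadingForm.sum _ fun a ha => ?_
  have had : Finsupp.weight v a ≤ d :=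
    WithBot.coe_le_coe.1 ((weight_le_weightedTotalDegree' ha).trans hf)
  have hmon := isWeightedHomogeneous_monomial v a (coeff a f) rfl
  obtain had | rfl := had.lt_or_eq
  · rw [hmon.weightedHomogeneousComponent_ne d had.ne', map_zero, isLeadingForm_zero_right_iff]
    exact (isLeadingForm_map_monomial ψ hv a _).weightedTotalDegree'_le.trans_lt
      (WithBot.coe_lt_coe.2 had)
  · rw [hmon.weightedHomogeneousComponent_same]
    exact isLeadingForm_map_monomial ψ hv a _

theorem weightedHomogeneousComponent_map (hv : ∀ i, weightedTotalDegree' u (ψ (X i)) ≤ v i)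
    {f : MvPolynomial σ R} (hf : weightedTotalDegree' v f ≤ d) :
    weightedHomogeneousComponent u d (ψ f) =
      aeval (fun i => weightedHomogeneousComponent u (v i) (ψ (X i)))
        (weightedHomogeneousComponent v d f) :=
  (isLeadingForm_map ψ hv hf).weightedHomogeneousComponent_eq

end WeightedDegree

theorem weightedHomogeneousComponent_mem_supported {R σ M : Type*} [CommRing R]
    [AddCommMonoid M] {w : σ → M} {s : Set σ} {p : MvPolynomial σ R} (hp : p ∈ supported R s)
    (d : M) : weightedHomogeneousComponent w d p ∈ supported R s := by
  classical
  rw [mem_supported] at hp ⊢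
  refine subset_trans (fun i hi => ?_) hp
  obtain ⟨a, ha, hia⟩ := (mem_vars_iff_mem_support i).1 hi
  rw [support_weightedHomogeneousComponent] at ha
  exact (mem_vars_iff_mem_support i).2 ⟨a, (Finset.mem_filter.1 ha).1, hia⟩

end MvPolynomial

theorem mwt_eq_weight {n : ℕ} {Γ : Type*} [AddCommGroup Γ] (w : Fin n → Γ) (a : Fin n →₀ ℕ) :
    mwt w a = Finsupp.weight w a := by
  rw [mwt, Finsupp.weight_apply]

section InitialForm

variable {k Γ : Type*} [CommRing k] [AddCommGroup Γ] [LinearOrder Γ] [IsOrderedAddMonoid Γ]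
  {n : ℕ} {w : Fin n → Γ} {f : MvPolynomial (Fin n) k}

theorem wdeg_eq_weightedTotalDegree' (w : Fin n → Γ) (f : MvPolynomial (Fin n) k) :
    wdeg w f = weightedTotalDegree' w f := by
  simp only [wdeg, weightedTotalDegree', mwt_eq_weight]

theorem exists_wdeg_eq (hf : f ≠ 0) : ∃ d : Γ, wdeg w f = d := by
  obtain ⟨d, hd⟩ := WithBot.ne_bot_iff_exists.1 (show wdeg w f ≠ ⊥ by
    rwa [Ne, wdeg_eq_weightedTotalDegree', weightedTotalDegree'_eq_bot_iff])
  exact ⟨d, hd.symm⟩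

theorem initForm_eq_weightedHomogeneousComponent {d : Γ} (hd : wdeg w f = d) :
    initForm w f = weightedHomogeneousComponent w d f := by
  classical
  simp only [initForm, weightedHomogeneousComponent_apply, hd, mwt_eq_weight, WithBot.coe_inj]

theorem initForm_ne_zero (hf : f ≠ 0) : initForm w f ≠ 0 := by
  obtain ⟨a, ha, hmax⟩ := Finset.exists_mem_eq_sup f.support (support_nonempty.2 hf)
    fun a => (Finsupp.weight w a : WithBot Γ)
  rw [initForm_eq_weightedHomogeneousComponent ((wdeg_eq_weightedTotalDegree' w f).trans hmax)]
  intro h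
  classical
  have := congrArg (coeff a) h
  rw [coeff_weightedHomogeneousComponent, if_pos rfl, coeff_zero] at this
  exact mem_support_iff.1 ha this

theorem aeval_initForm_eq_weightedHomogeneousComponent {m : ℕ}
    (ψ : MvPolynomial (Fin n) k →ₐ[k] MvPolynomial (Fin m) k) {u : Fin m → Γ} {uψ : Fin n → Γ}
    (huψ : ∀ i, (uψ i : WithBot Γ) = wdeg u (ψ (X i))) {d : Γ} (hd : wdeg uψ f = d) :
    aeval (fun i => initForm u (ψ (X i))) (initForm uψ f) =
      weightedHomogeneousComponent u d (ψ f) := by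
  have hX : (fun i => initForm u (ψ (X i))) =
      fun i => weightedHomogeneousComponent u (uψ i) (ψ (X i)) :=
    funext fun i => initForm_eq_weightedHomogeneousComponent (huψ i).symm
  rw [hX, initForm_eq_weightedHomogeneousComponent hd]
  refine (weightedHomogeneousComponent_map ψ (fun i => ?_) ?_).symm
  · rw [← wdeg_eq_weightedTotalDegree', ← huψ]
  · rw [← wdeg_eq_weightedTotalDegree', hd]

end InitialForm

theorem exists_not_dvd_initForm_general {k Γ : Type*} [CommRing k] [IsDomain k]
    [AddCommGroup Γ] [LinearOrder Γ] [IsOrderedAddMonoid Γ] {n m l : ℕ}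
    (ψ : MvPolynomial (Fin n) k →ₐ[k] MvPolynomial (Fin m) k)
    (u : Fin m → Γ) (uψ : Fin n → Γ)
    (huψ : ∀ i, (uψ i : WithBot Γ) = wdeg u (ψ (X i)))
    (hinj : Function.Injective fun f : MvPolynomial (Fin n) k =>
      aeval (fun i => initForm u (ψ (X i))) f)
    (hnc : ¬ ∀ f : MvPolynomial (Fin n) k,
      aeval (fun i => initForm u (ψ (X i))) f ∈ supported k {i : Fin m | (i : ℕ) < l})
    (S : Set (MvPolynomial (Fin n) k))
    (hStrdeg : ∃ y : Fin n → MvPolynomial (Fin n) k,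
      (∀ i, y i ∈ S) ∧ AlgebraicIndependent k y) :
    ∃ g ∈ S, ∀ f : MvPolynomial (Fin n) k, f ≠ 0 →
      ψ f ∈ supported k {i : Fin m | (i : ℕ) < l} → ¬ g ∣ initForm uψ f := by
  obtain ⟨y, hyS, hy⟩ := hStrdeg
  by_contra! hcon
  set T := (supported k {i : Fin m | (i : ℕ) < l}).comap (aeval fun i => initForm u (ψ (X i)))
  have hT : T.IsFactoriallyClosed := (isFactoriallyClosed_supported _).comap hinj
  have hyT : ∀ i, y i ∈ T := fun i => by
    obtain ⟨f, hf0, hfl, q, hq⟩ := hcon (y i) (hyS i)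
    obtain ⟨d, hd⟩ := exists_wdeg_eq (w := uψ) hf0
    refine hT (q := q) (fun hq0 => initForm_ne_zero hf0 (by rw [hq, hq0, mul_zero])) ?_
    rw [← hq, Subalgebra.mem_comap, aeval_initForm_eq_weightedHomogeneousComponent ψ huψ hd]
    exact weightedHomogeneousComponent_mem_supported hfl d
  have : Algebra.IsAlgebraic (Algebra.adjoin k (Set.range y)) (MvPolynomial (Fin n) k) :=
    (hy.isTranscendenceBasis_of_lift_trdeg_le_of_finite (by simp)).isAlgebraic
  have hTtop : T = ⊤ := hT.eq_top (Algebra.adjoin_le (Set.range_subset_iff.2 hyT))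
  exact hnc fun f => show f ∈ T from hTtop ▸ Algebra.mem_top

/-- If `ψ^u` is injective and `ψ^u(k[x_1,…,x_n]) ⊄ k[x_1,…,x_l]`, then for any
`S ⊂ k[x_1,…,x_n]∖{0}` with `trdeg_k k[S] = n` there is `g ∈ S` dividing no
initial form `f^{u_ψ}` with `f ∈ ψ⁻¹(k[x_1,…,x_l])` nonzero. -/
theorem exists_not_dvd_initForm {k Γ : Type*} [CommRing k] [IsDomain k]
    [AddCommGroup Γ] [LinearOrder Γ] [IsOrderedAddMonoid Γ] {n m l : ℕ} (hnm : n ≤ m) (hl1 : 1 ≤ l) (hlm : l ≤ m)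
    (ψ : MvPolynomial (Fin n) k →ₐ[k] MvPolynomial (Fin m) k)
    (hψ : ∀ i, ψ (X i) ≠ 0) (u : Fin m → Γ) (uψ : Fin n → Γ)
    (huψ : ∀ i, (uψ i : WithBot Γ) = wdeg u (ψ (X i)))
    (hinj : Function.Injective fun f : MvPolynomial (Fin n) k =>
      aeval (fun i => initForm u (ψ (X i))) f)
    (hnc : ¬ ∀ f : MvPolynomial (Fin n) k,
      aeval (fun i => initForm u (ψ (X i))) f ∈ supported k {i : Fin m | (i : ℕ) < l})
    (S : Set (MvPolynomial (Fin n) k)) (hS0 : (0 : MvPolynomial (Fin n) k) ∉ S)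
    (hStrdeg : ∃ y : Fin n → MvPolynomial (Fin n) k,
      (∀ i, y i ∈ S) ∧ AlgebraicIndependent k y) :
    ∃ g ∈ S, ∀ f : MvPolynomial (Fin n) k, f ≠ 0 →
      ψ f ∈ supported k {i : Fin m | (i : ℕ) < l} → ¬ g ∣ initForm uψ f :=
  exists_not_dvd_initForm_general ψ u uψ huψ hinj hnc S hStrdeg
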